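/- Taylor–Proudman theorem in ℝ⁵ with simultaneously fast double rotation: let λ₁, λ₂ ∈ ℝ with λ₁ ≠ 0 and λ₂ ≠ 0, let u : ℝ⁵ → ℝ⁵ be continuously differentiable and Π : ℝ⁵ → ℝ twice continuously differentiable such that 2(−λ₁ u₂(x), λ₁ u₁(x), −λ₂ u₄(x), λ₂ u₃(x), 0) = −∇Π(x) for all x ∈ ℝ⁵. Then everywhere: u_{1,1} + u_{2,2} = 0, u_{3,3} + u_{4,4} = 0, λ₁ u_{1,3} + λ₂ u_{4,2} = 0, λ₁ u_{2,3} − λ₂ u_{4,1} = 0, λ₁ u_{1,4} − λ₂ u_{3,2} = 0, λ₁ u_{2,4} + λ₂ u_{3,1} = 0, and in addition the cylinder conditions along the rotation axis x₅: u_{1,5} = u_{2,5} = u_{3,5} = u_{4,5} = 0, while no constraint is imposed on u₅. -/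

import Mathlib

/-!
In geostrophic balance each horizontal velocity component is a constant multiple of a partial
derivative of the pressure: `u₂ = ∂₁Π / (2λ₁)`, `u₁ = -∂₂Π / (2λ₁)`, `u₄ = ∂₃Π / (2λ₂)`,
`u₃ = -∂₄Π / (2λ₂)`, while `∂₅Π = 0`. Every derivative of `u₁, …, u₄` is therefore a multiple of
a second derivative of `Π`, and all the stated identities follow from the symmetry of the Hessian
of the `C²` function `Π` (for the cylinder conditions, `∂₅∂ᵢΠ = ∂ᵢ∂₅Π = 0`). In the code the
coordinates `x₁, …, x₅` are indexed `0, …, 4`.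
-/

/-- The partial derivative `∂ᵢ f` of a scalar function on `ℝ^n` at `x`. -/
noncomputable def pd {n : ℕ} (i : Fin n) (f : (Fin n → ℝ) → ℝ) (x : Fin n → ℝ) : ℝ :=
  fderiv ℝ f x (Pi.single i 1)

section PartialDerivatives

variable {n : ℕ}

lemma pd_const (i : Fin n) (c : ℝ) (x : Fin n → ℝ) : pd i (fun _ => c) x = 0 := by
  simp [pd]

lemma pd_const_mul (i : Fin n) (c : ℝ) (f : (Fin n → ℝ) → ℝ) (x : Fin n → ℝ) :
    pd i (fun y => c * f y) x = c * pd i f x := by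
  change fderiv ℝ (c • f) x _ = _
  simp [fderiv_const_smul_field, pd]

lemma pd_congr_const_mul {f g : (Fin n → ℝ) → ℝ} {c : ℝ} (h : ∀ y, f y = c * g y)
    (i : Fin n) (x : Fin n → ℝ) : pd i f x = c * pd i g x := by
  rw [show f = fun y => c * g y from funext h, pd_const_mul]

lemma pd_pd_eq_fderiv_fderiv {f : (Fin n → ℝ) → ℝ} {x : Fin n → ℝ}
    (hf : DifferentiableAt ℝ (fderiv ℝ f) x) (i j : Fin n) :
    pd i (pd j f) x = fderiv ℝ (fderiv ℝ f) x (Pi.single i 1) (Pi.single j 1) := by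
  change fderiv ℝ (fun y => fderiv ℝ f y (Pi.single j 1)) x _ = _
  simp [fderiv_clm_apply hf (differentiableAt_const _)]

lemma pd_pd_comm {f : (Fin n → ℝ) → ℝ} (hf : ContDiff ℝ 2 f) (i j : Fin n) (x : Fin n → ℝ) :
    pd i (pd j f) x = pd j (pd i f) x := by
  have hf' : DifferentiableAt ℝ (fderiv ℝ f) x :=
    (hf.fderiv_right (by norm_num)).differentiable one_ne_zero x
  rw [pd_pd_eq_fderiv_fderiv hf', pd_pd_eq_fderiv_fderiv hf']
  exact hf.contDiffAt.isSymmSndFDerivAt (by simp) _ _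

end PartialDerivatives

lemma eq_neg_inv_mul_of_two_mul_eq_neg {a b c : ℝ} (ha : a ≠ 0) (h : 2 * (a * b) = -c) :
    b = -(2 * a)⁻¹ * c := by
  field_simp
  linarith

theorem taylor_proudman_R5_double_rotation_general
    (lam₁ lam₂ : ℝ) (h₁ : lam₁ ≠ 0) (h₂ : lam₂ ≠ 0)
    (u : (Fin 5 → ℝ) → (Fin 5 → ℝ))
    (Pr : (Fin 5 → ℝ) → ℝ) (hPr : ContDiff ℝ 2 Pr)
    (hbal : ∀ x : Fin 5 → ℝ,
      2 * (-lam₁ * u x 1) = -(pd 0 Pr x) ∧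
      2 * (lam₁ * u x 0) = -(pd 1 Pr x) ∧
      2 * (-lam₂ * u x 3) = -(pd 2 Pr x) ∧
      2 * (lam₂ * u x 2) = -(pd 3 Pr x) ∧
      (0 : ℝ) = -(pd 4 Pr x)) :
    ∀ x : Fin 5 → ℝ,
      pd 0 (fun y => u y 0) x + pd 1 (fun y => u y 1) x = 0 ∧
      pd 2 (fun y => u y 2) x + pd 3 (fun y => u y 3) x = 0 ∧
      lam₁ * pd 2 (fun y => u y 0) x + lam₂ * pd 1 (fun y => u y 3) x = 0 ∧
      lam₁ * pd 2 (fun y => u y 1) x - lam₂ * pd 0 (fun y => u y 3) x = 0 ∧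
      lam₁ * pd 3 (fun y => u y 0) x - lam₂ * pd 1 (fun y => u y 2) x = 0 ∧
      lam₁ * pd 3 (fun y => u y 1) x + lam₂ * pd 0 (fun y => u y 2) x = 0 ∧
      pd 4 (fun y => u y 0) x = 0 ∧
      pd 4 (fun y => u y 1) x = 0 ∧
      pd 4 (fun y => u y 2) x = 0 ∧
      pd 4 (fun y => u y 3) x = 0 := by
  have h₁' : -lam₁ ≠ 0 := neg_ne_zero.mpr h₁
  have h₂' : -lam₂ ≠ 0 := neg_ne_zero.mpr h₂
  have hu₀ := pd_congr_const_mul fun y => eq_neg_inv_mul_of_two_mul_eq_neg h₁ (hbal y).2.1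
  have hu₁ := pd_congr_const_mul fun y => eq_neg_inv_mul_of_two_mul_eq_neg h₁' (hbal y).1
  have hu₂ := pd_congr_const_mul fun y => eq_neg_inv_mul_of_two_mul_eq_neg h₂ (hbal y).2.2.2.1
  have hu₃ := pd_congr_const_mul fun y => eq_neg_inv_mul_of_two_mul_eq_neg h₂' (hbal y).2.2.1
  have hPr₄ : pd 4 Pr = fun _ => 0 := funext fun y => neg_eq_zero.mp (hbal y).2.2.2.2.symm
  intro x
  simp only [hu₀, hu₁, hu₂, hu₃, pd_pd_comm hPr 4, hPr₄, pd_const, mul_zero, and_self, and_true]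
  refine ⟨?_, ?_, ?_, ?_, ?_, ?_⟩
  · rw [pd_pd_comm hPr 1 0]; ring
  · rw [pd_pd_comm hPr 3 2]; ring
  · rw [pd_pd_comm hPr 1 2]; field_simp; ring
  · rw [pd_pd_comm hPr 0 2]; field_simp; ring
  · rw [pd_pd_comm hPr 1 3]; field_simp; ring
  · rw [pd_pd_comm hPr 0 3]; field_simp; ring

/-- Taylor–Proudman theorem in `ℝ⁵` with simultaneously fast double
rotation (rates `λ₁` in the `x₁`-`x₂` plane, `λ₂` in the `x₃`-`x₄` plane, both nonzero;
rotation axis `x₅`): geostrophic balance implies planar incompressibilities, the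
cross-plane relations, and the cylinder conditions along `x₅` (0-indexed coordinates). -/
theorem taylor_proudman_R5_double_rotation
    (lam₁ lam₂ : ℝ) (h₁ : lam₁ ≠ 0) (h₂ : lam₂ ≠ 0)
    (u : (Fin 5 → ℝ) → (Fin 5 → ℝ)) (hu : ContDiff ℝ 1 u)
    (Pr : (Fin 5 → ℝ) → ℝ) (hPr : ContDiff ℝ 2 Pr)
    (hbal : ∀ x : Fin 5 → ℝ,
      2 * (-lam₁ * u x 1) = -(pd 0 Pr x) ∧
      2 * (lam₁ * u x 0) = -(pd 1 Pr x) ∧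
      2 * (-lam₂ * u x 3) = -(pd 2 Pr x) ∧
      2 * (lam₂ * u x 2) = -(pd 3 Pr x) ∧
      (0 : ℝ) = -(pd 4 Pr x)) :
    ∀ x : Fin 5 → ℝ,
      pd 0 (fun y => u y 0) x + pd 1 (fun y => u y 1) x = 0 ∧
      pd 2 (fun y => u y 2) x + pd 3 (fun y => u y 3) x = 0 ∧
      lam₁ * pd 2 (fun y => u y 0) x + lam₂ * pd 1 (fun y => u y 3) x = 0 ∧
      lam₁ * pd 2 (fun y => u y 1) x - lam₂ * pd 0 (fun y => u y 3) x = 0 ∧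
      lam₁ * pd 3 (fun y => u y 0) x - lam₂ * pd 1 (fun y => u y 2) x = 0 ∧
      lam₁ * pd 3 (fun y => u y 1) x + lam₂ * pd 0 (fun y => u y 2) x = 0 ∧
      pd 4 (fun y => u y 0) x = 0 ∧
      pd 4 (fun y => u y 1) x = 0 ∧
      pd 4 (fun y => u y 2) x = 0 ∧
      pd 4 (fun y => u y 3) x = 0 :=
  taylor_proudman_R5_double_rotation_general lam₁ lam₂ h₁ h₂ u Pr hPr hbal
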